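/- arXiv:1405.6417 — 7 statements merged into one kernel-verified Lean document; each statement's English description precedes it below -/
import Mathlib

section
/- Suppose the kernel of a matrix X ∈ ℝ^{n×p} satisfies NSP(s, C) for some C > 1. Then for every s-sparse vector β* ∈ ℝ^p, β* is the unique minimizer of ‖β‖₁ subject to Xβ = Xβ*. -/
/-! Write `γ = β' - β ∈ ker X` and `S = supp β`. With `C > 1`, NSP gives the strict inequality
`‖γ_S‖₁ < ‖γ_{Sᶜ}‖₁` for `γ ≠ 0`, and then
`‖β'‖₁ = ‖β_S + γ_S‖₁ + ‖γ_{Sᶜ}‖₁ ≥ ‖β‖₁ - ‖γ_S‖₁ + ‖γ_{Sᶜ}‖₁ > ‖β‖₁`. -/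

open Finset

variable {ι : Type*} [Fintype ι] [DecidableEq ι]

theorem sum_abs_lt_sum_abs_compl_of_one_lt {C : ℝ} (hC : 1 < C) {γ : ι → ℝ} (hγ : γ ≠ 0)
    {S : Finset ι} (hS : C * ∑ i ∈ S, |γ i| ≤ ∑ i ∈ Sᶜ, |γ i|) :
    ∑ i ∈ S, |γ i| < ∑ i ∈ Sᶜ, |γ i| := by
  obtain ⟨j, hj⟩ := Function.ne_iff.mp hγ
  have htotal : 0 < ∑ i ∈ S, |γ i| + ∑ i ∈ Sᶜ, |γ i| := by
    rw [sum_add_sum_compl]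
    exact sum_pos' (fun i _ => abs_nonneg _) ⟨j, mem_univ j, abs_pos.mpr hj⟩
  have hS_nonneg : 0 ≤ ∑ i ∈ S, |γ i| := sum_nonneg fun i _ => abs_nonneg _
  nlinarith

theorem sum_abs_lt_sum_abs_add {S : Finset ι} {β γ : ι → ℝ} (hβ : ∀ i ∉ S, β i = 0)
    (hγ : ∑ i ∈ S, |γ i| < ∑ i ∈ Sᶜ, |γ i|) :
    ∑ i, |β i| < ∑ i, |β i + γ i| := by
  have hβ_sum : ∑ i, |β i| = ∑ i ∈ S, |β i| :=
    (sum_subset (subset_univ S) fun i _ hi => by rw [hβ i hi, abs_zero]).symm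
  have hβγ_sum : ∑ i, |β i + γ i| = ∑ i ∈ S, |β i + γ i| + ∑ i ∈ Sᶜ, |γ i| := by
    rw [← sum_add_sum_compl S]
    congr 1
    exact sum_congr rfl fun i hi => by rw [hβ i (mem_compl.mp hi), zero_add]
  have h_triangle : ∑ i ∈ S, |β i| - ∑ i ∈ S, |γ i| ≤ ∑ i ∈ S, |β i + γ i| := by
    rw [← sum_sub_distrib]
    exact sum_le_sum fun i _ => by simpa using abs_sub_abs_le_abs_sub (β i) (-γ i)
  linarith

/-- If the kernel of `X` satisfies NSP(s, C) with `C > 1`, then every `s`-sparse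
vector `β*` is the unique minimizer of `‖β‖₁` subject to `Xβ = Xβ*`. -/
theorem nsp_unique_l1_minimizer {n p : ℕ} (X : Matrix (Fin n) (Fin p) ℝ)
    (s : ℕ) (C : ℝ) (hC : 1 < C)
    (hNSP : ∀ γ : Fin p → ℝ, X.mulVec γ = 0 → ∀ S : Finset (Fin p), S.card ≤ s →
      C * ∑ i ∈ S, |γ i| ≤ ∑ i ∈ Sᶜ, |γ i|)
    (β : Fin p → ℝ)
    (hβ : (Finset.univ.filter fun i => β i ≠ 0).card ≤ s) :
    ∀ β' : Fin p → ℝ, X.mulVec β' = X.mulVec β → β' ≠ β →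
      ∑ i, |β i| < ∑ i, |β' i| := by
  intro β' hX hne
  have hker : X.mulVec (β' - β) = 0 := by rw [Matrix.mulVec_sub, hX, sub_self]
  have hγ := sum_abs_lt_sum_abs_compl_of_one_lt hC (sub_ne_zero.mpr hne) (hNSP _ hker _ hβ)
  have hsupp : ∀ i ∉ univ.filter fun i => β i ≠ 0, β i = 0 := by simp
  simpa using sum_abs_lt_sum_abs_add hsupp hγ
end

section
/- If the kernel of X ∈ ℝ^{n×p} satisfies NSP(s, C) with C > 1, then for every β* ∈ ℝ^p and every minimizer β̂ of ‖β‖₁ subject to Xβ = Xβ*, one has ‖β* − β̂‖₁ ≤ (2(C+1)/(C−1)) · min_{|S| ≤ s} ‖β* − β*_S‖₁. -/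
/-!
Put `h = β* − β̂ ∈ ker X`. Minimality of `β̂` against the feasible point `β*`, split over `S`
and `Sᶜ` with the triangle inequality, gives the cone condition
`‖h_{Sᶜ}‖₁ ≤ ‖h_S‖₁ + 2‖β*_{Sᶜ}‖₁`. Combined with the null space property
`C‖h_S‖₁ ≤ ‖h_{Sᶜ}‖₁` this forces `‖h_S‖₁ ≤ 2‖β*_{Sᶜ}‖₁/(C − 1)`, and then
`‖h‖₁ ≤ 2‖h_S‖₁ + 2‖β*_{Sᶜ}‖₁` is the claimed bound.
-/

open Finset

theorem sum_abs_compl_sub_le_of_sum_abs_le {ι : Type*} [Fintype ι] [DecidableEq ι]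
    {β βh : ι → ℝ} (hle : ∑ i, |βh i| ≤ ∑ i, |β i|) (S : Finset ι) :
    ∑ i ∈ Sᶜ, |β i - βh i| ≤ ∑ i ∈ S, |β i - βh i| + 2 * ∑ i ∈ Sᶜ, |β i| := by
  have on_S : ∑ i ∈ S, |β i| ≤ ∑ i ∈ S, |βh i| + ∑ i ∈ S, |β i - βh i| := by
    rw [← sum_add_distrib]
    exact sum_le_sum fun i _ => by linarith [abs_sub_abs_le_abs_sub (β i) (βh i)]
  have on_compl : ∑ i ∈ Sᶜ, |β i - βh i| ≤ ∑ i ∈ Sᶜ, |β i| + ∑ i ∈ Sᶜ, |βh i| := by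
    rw [← sum_add_distrib]
    exact sum_le_sum fun i _ => abs_sub _ _
  rw [← sum_add_sum_compl S, ← sum_add_sum_compl S (fun i => |β i|)] at hle
  linarith

theorem add_le_of_mul_le_of_le_add {A B b C : ℝ} (hC : 1 < C)
    (hnsp : C * A ≤ B) (hcone : B ≤ A + 2 * b) :
    A + B ≤ 2 * (C + 1) / (C - 1) * b := by
  have hA_le : A ≤ 2 * b / (C - 1) := by
    rw [le_div_iff₀ (by linarith)]
    linarith
  calc A + B ≤ 2 * (2 * b / (C - 1)) + 2 * b := by linarith
    _ = 2 * (C + 1) / (C - 1) * b := by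
      field_simp [(by linarith : C - 1 ≠ 0)]
      ring

/-- If the kernel of `X` satisfies NSP(s, C) with `C > 1`, then every `ℓ¹`
minimizer `β̂` subject to `Xβ̂ = Xβ*` satisfies
`‖β* − β̂‖₁ ≤ (2(C+1)/(C−1)) · min_{|S| ≤ s} ‖β* − β*_S‖₁`
(stated equivalently as the bound for every `S` with `|S| ≤ s`,
where `‖β* − β*_S‖₁ = ∑_{i ∉ S} |β*_i|`). -/
theorem nsp_l1_error_bound {n p : ℕ} (X : Matrix (Fin n) (Fin p) ℝ)
    (s : ℕ) (C : ℝ) (hC : 1 < C)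
    (hNSP : ∀ γ : Fin p → ℝ, X.mulVec γ = 0 → ∀ S : Finset (Fin p), S.card ≤ s →
      C * ∑ i ∈ S, |γ i| ≤ ∑ i ∈ Sᶜ, |γ i|)
    (β βh : Fin p → ℝ)
    (hfeas : X.mulVec βh = X.mulVec β)
    (hmin : ∀ β' : Fin p → ℝ, X.mulVec β' = X.mulVec β →
      ∑ i, |βh i| ≤ ∑ i, |β' i|) :
    ∀ S : Finset (Fin p), S.card ≤ s →
      ∑ i, |β i - βh i| ≤ (2 * (C + 1) / (C - 1)) * ∑ i ∈ Sᶜ, |β i| := by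
  intro S hS
  have hker : X.mulVec (β - βh) = 0 := by rw [Matrix.mulVec_sub, hfeas, sub_self]
  rw [← sum_add_sum_compl S]
  exact add_le_of_mul_le_of_le_add hC (hNSP _ hker S hS)
    (sum_abs_compl_sub_le_of_sum_abs_le (hmin β rfl) S)
end

section
/- Conversely, if for every s-sparse β* ∈ ℝ^p the program minimizing ‖β‖₁ subject to Xβ = Xβ* has β* as its unique solution, then for every nonzero γ ∈ ker(X) and every S with |S| ≤ s one has ‖γ_S‖₁ < ‖γ_{S^c}‖₁. -/
/-- If every `s`-sparse `β*` is the unique solution of the `ℓ¹`-minimization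
program with constraint `Xβ = Xβ*`, then the kernel of `X` satisfies the strict
Null-Space Property: for every nonzero `γ ∈ ker X` and every `S` with
`|S| ≤ s`, `‖γ_S‖₁ < ‖γ_{S^c}‖₁`. -/
theorem unique_l1_minimizer_imp_nsp {n p : ℕ} (X : Matrix (Fin n) (Fin p) ℝ)
    (s : ℕ)
    (hrec : ∀ β : Fin p → ℝ, (Finset.univ.filter fun i => β i ≠ 0).card ≤ s →
      ∀ β' : Fin p → ℝ, X.mulVec β' = X.mulVec β → β' ≠ β →
        ∑ i, |β i| < ∑ i, |β' i|) :
    ∀ γ : Fin p → ℝ, X.mulVec γ = 0 → γ ≠ 0 →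
      ∀ S : Finset (Fin p), S.card ≤ s →
        ∑ i ∈ S, |γ i| < ∑ i ∈ Sᶜ, |γ i| := by
  intro γ hker hne S hS
  set β : Fin p → ℝ := fun i => if i ∈ S then γ i else 0 with hβ
  set β' : Fin p → ℝ := fun i => if i ∈ S then 0 else -γ i with hβ'
  have hdiff : β - β' = γ := by
    funext i
    simp only [Pi.sub_apply, hβ, hβ']
    by_cases h : i ∈ S <;> simp [h]
  have hsparse : (Finset.univ.filter fun i => β i ≠ 0).card ≤ s := by
    refine le_trans (Finset.card_le_card ?_) hS
    intro i hi
    simp only [Finset.mem_filter, hβ] at hi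
    by_contra h
    exact hi.2 (if_neg h)
  have hXeq : X.mulVec β' = X.mulVec β := by
    have := congrArg X.mulVec hdiff
    rw [Matrix.mulVec_sub, hker, sub_eq_zero] at this
    exact this.symm
  have hneq : β' ≠ β := by
    intro h
    apply hne
    rw [← hdiff, h, sub_self]
  have key := hrec β hsparse β' hXeq hneq
  calc ∑ i ∈ S, |γ i| = ∑ i, |β i| := by
        rw [← Finset.sum_subset (Finset.subset_univ S)]
        · exact Finset.sum_congr rfl fun i hi => by simp [hβ, hi]
        · intro i _ hi; simp [hβ, hi]
    _ < ∑ i, |β' i| := key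
    _ = ∑ i ∈ Sᶜ, |γ i| := by
        rw [← Finset.sum_subset (Finset.subset_univ Sᶜ)]
        · exact Finset.sum_congr rfl fun i hi => by
            simp only [Finset.mem_compl] at hi; simp [hβ', hi]
        · intro i _ hi; simp only [Finset.mem_compl, not_not] at hi; simp [hβ', hi]
end

section
/- Let X be a real random variable with the Student t-distribution with d ≥ 1 degrees of freedom. Then its density is bounded uniformly by (2π)^{−1/2}. -/
open Real Set

lemma gamma_add_half_le (x : ℝ) (hx : 0 < x) :
    Real.Gamma (x + 1 / 2) ≤ Real.sqrt x * Real.Gamma x := by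
  have h1 : (x : ℝ) ∈ Ioi (0 : ℝ) := hx
  have h2 : (x + 1 : ℝ) ∈ Ioi (0 : ℝ) := by simp [Ioi]; linarith
  have hc := Real.convexOn_log_Gamma.2 h1 h2 (by norm_num : (0:ℝ) ≤ 1/2)
      (by norm_num : (0:ℝ) ≤ 1/2) (by norm_num)
  simp only [Function.comp, smul_eq_mul] at hc
  have hmid : 1 / 2 * x + 1 / 2 * (x + 1) = x + 1 / 2 := by ring
  rw [hmid] at hc
  have hG1 : Real.Gamma (x + 1) = x * Real.Gamma x := Real.Gamma_add_one hx.ne'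
  have hGx : 0 < Real.Gamma x := Real.Gamma_pos_of_pos hx
  have hGh : 0 < Real.Gamma (x + 1 / 2) := Real.Gamma_pos_of_pos (by linarith)
  have hrhs : 0 < Real.sqrt x * Real.Gamma x := by positivity
  rw [← Real.log_le_log_iff hGh hrhs]
  calc Real.log (Real.Gamma (x + 1/2))
      ≤ 1/2 * Real.log (Real.Gamma x) + 1/2 * Real.log (Real.Gamma (x+1)) := hc
    _ = Real.log (Real.sqrt x * Real.Gamma x) := by
        rw [hG1, Real.log_mul hx.ne' hGx.ne',
          Real.log_mul (Real.sqrt_pos.mpr hx).ne' hGx.ne', Real.log_sqrt hx.le]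
        ring

/-- The Student t density with `d ≥ 1` degrees of freedom is uniformly bounded
by `(2π)^{−1/2}`. -/
theorem studentT_density_le (d : ℕ) (hd : 1 ≤ d) (x : ℝ) :
    Real.Gamma (((d : ℝ) + 1) / 2) /
        (Real.sqrt (d * Real.pi) * Real.Gamma (d / 2)) *
        (1 + x ^ 2 / d) ^ (-(((d : ℝ) + 1) / 2)) ≤
      1 / Real.sqrt (2 * Real.pi) := by
  have hd' : (0:ℝ) < d := by exact_mod_cast hd
  have hGd : 0 < Real.Gamma ((d:ℝ) / 2) := Real.Gamma_pos_of_pos (by positivity)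
  have hden : 0 < Real.sqrt (d * Real.pi) * Real.Gamma ((d:ℝ) / 2) := by
    have : 0 < Real.sqrt ((d:ℝ) * Real.pi) := Real.sqrt_pos.mpr (by positivity)
    positivity
  have hA : Real.Gamma (((d : ℝ) + 1) / 2) /
      (Real.sqrt (d * Real.pi) * Real.Gamma (d / 2)) ≤ 1 / Real.sqrt (2 * Real.pi) := by
    rw [div_le_div_iff₀ hden (Real.sqrt_pos.mpr (by positivity))]
    have key := gamma_add_half_le ((d:ℝ)/2) (by positivity)
    have heq : (d:ℝ)/2 + 1/2 = ((d:ℝ)+1)/2 := by ring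
    rw [heq] at key
    calc Real.Gamma (((d:ℝ)+1)/2) * Real.sqrt (2 * Real.pi)
        ≤ (Real.sqrt ((d:ℝ)/2) * Real.Gamma ((d:ℝ)/2)) * Real.sqrt (2 * Real.pi) := by
          apply mul_le_mul_of_nonneg_right key (Real.sqrt_nonneg _)
      _ = 1 * (Real.sqrt (d * Real.pi) * Real.Gamma ((d:ℝ)/2)) := by
          have h1 : Real.sqrt ((d:ℝ)/2) * Real.sqrt (2*Real.pi) = Real.sqrt ((d:ℝ)*Real.pi) := by
            rw [← Real.sqrt_mul (by positivity)]; congr 1; ring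
          rw [← h1]; ring
  have hbase : (1:ℝ) ≤ 1 + x ^ 2 / d := by
    have : (0:ℝ) ≤ x^2 / d := by positivity
    linarith
  have hpow : (1 + x ^ 2 / d) ^ (-(((d : ℝ) + 1) / 2)) ≤ 1 := by
    apply Real.rpow_le_one_of_one_le_of_nonpos hbase
    have : (0:ℝ) < ((d:ℝ)+1)/2 := by positivity
    linarith
  have hApos : 0 ≤ Real.Gamma (((d : ℝ) + 1) / 2) /
      (Real.sqrt (d * Real.pi) * Real.Gamma (d / 2)) := by
    have := Real.Gamma_pos_of_pos (show (0:ℝ) < ((d:ℝ)+1)/2 by positivity)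
    positivity
  calc Real.Gamma (((d : ℝ) + 1) / 2) / (Real.sqrt (d * Real.pi) * Real.Gamma (d / 2))
        * (1 + x ^ 2 / d) ^ (-(((d : ℝ) + 1) / 2))
      ≤ Real.Gamma (((d : ℝ) + 1) / 2) / (Real.sqrt (d * Real.pi) * Real.Gamma (d / 2)) * 1 :=
        mul_le_mul_of_nonneg_left hpow hApos
    _ ≤ 1 / Real.sqrt (2 * Real.pi) := by rw [mul_one]; exact hA
end

section
/- Let Zo = Σ_{i=1}^k [−g^i, g^i] be the zonotope (Minkowski sum of centered segments) generated by vectors g^1, …, g^k ∈ ℝ^m, and let e^1, …, e^k be the orthonormal basis from Gram–Schmidt orthogonalization of g^1, …, g^k (assumed linearly independent). Let ξ be an isotropic centered Gaussian vector on span(g^1,…,g^k). Then P(ξ ∈ Zo) ≤ P(ξ ∈ R), where R = Σ_{i=1}^k [−⟨e^i, g^i⟩ e^i, ⟨e^i, g^i⟩ e^i] is the hyper-rectangle with edges along the e^i of half-lengths ⟨e^i, g^i⟩. -/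
/-!
In the coordinates `zⱼ = ⟨eʲ, x⟩` the Gaussian is the product measure `γ^⊗k`, `γ = N(0, σ²)`,
the rectangle is the box `∏ [-Cᵢᵢ, Cᵢᵢ]`, and the zonotope lies in the image of the cube
`[-1, 1]^k` under the matrix `Cⱼᵢ = ⟨eʲ, gⁱ⟩`, which is upper triangular with positive diagonal.
For a translated cube `v + C [-1, 1]^k` the last row reads `z_k = v_k + C_kk t_k`, so fixing `z_k`
fixes `t_k`: the slice at height `z_k` is empty unless `z_k ∈ [v_k - C_kk, v_k + C_kk]`, and
otherwise lies in a translated cube of one dimension less under the leading block of `C`. By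
Fubini and induction on `k` it remains to centre that interval, which is the one-dimensional
Anderson inequality `γ([a - r, a + r]) ≤ γ([-r, r])`: the reflection `x ↦ a - x` exchanges the
two set differences of these intervals and moves the points of `[a - r, a + r] \ [-r, r]` closer
to `0`, where the density is larger.
-/

open MeasureTheory ProbabilityTheory

/-- Gram–Schmidt orthonormalization of a family of vectors of `ℝ^m`. -/
noncomputable def gramSchmidtONB {k m : ℕ} (g : Fin k → EuclideanSpace ℝ (Fin m)) :
    Fin k → EuclideanSpace ℝ (Fin m) :=
  @InnerProductSpace.gramSchmidtNormed ℝ _ _ _ _ (Fin k) _ _ Finite.to_wellFoundedLT g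

open Set Matrix InnerProductSpace
open scoped ENNReal NNReal

theorem withDensity_Icc_sub_add_le_Icc_neg {f : ℝ → ℝ≥0∞}
    (hf : ∀ x y, |x| ≤ |y| → f y ≤ f x) (a r : ℝ) :
    volume.withDensity f (Icc (a - r) (a + r)) ≤ volume.withDensity f (Icc (-r) r) := by
  set A := Icc (a - r) (a + r)
  set B := Icc (-r) r
  have hreflect : (a - ·) ⁻¹' (B \ A) = A \ B := by
    simp only [A, B, preimage_sdiff, preimage_const_sub_Icc, sub_neg_eq_add, sub_add_cancel_left,
      sub_sub_cancel]
  have hdiff : volume.withDensity f (A \ B) ≤ volume.withDensity f (B \ A) := calc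
    volume.withDensity f (A \ B) = ∫⁻ x in A \ B, f x := withDensity_apply' _ _
    _ ≤ ∫⁻ x in A \ B, f (a - x) := by
      refine setLIntegral_mono' (measurableSet_Icc.diff measurableSet_Icc) ?_
      rintro x ⟨⟨hxl, hxu⟩, hxB⟩
      have hrx : r < |x| := by by_contra h; exact hxB (abs_le.1 (not_lt.1 h))
      exact hf _ _ ((abs_le.2 ⟨by linarith, by linarith⟩).trans hrx.le)
    _ = ∫⁻ x in B \ A, f x := by
      rw [← hreflect, (volume.measurePreserving_sub_left a).setLIntegral_comp_preimage_emb
        (measurableEmbedding_subLeft a)]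
    _ = volume.withDensity f (B \ A) := (withDensity_apply' _ _).symm
  calc volume.withDensity f A
      = volume.withDensity f (A ∩ B) + volume.withDensity f (A \ B) :=
        (measure_inter_add_sdiff A measurableSet_Icc).symm
    _ ≤ volume.withDensity f (B ∩ A) + volume.withDensity f (B \ A) := by
        rw [inter_comm]; gcongr
    _ = volume.withDensity f B := measure_inter_add_sdiff B measurableSet_Icc

theorem gaussianPDF_le_of_abs_le (v : ℝ≥0) {x y : ℝ} (h : |x| ≤ |y|) :
    gaussianPDF 0 v y ≤ gaussianPDF 0 v x := by
  simp only [gaussianPDF, gaussianPDFReal, sub_zero, ← sq_abs x, ← sq_abs y]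
  gcongr

theorem gaussianReal_Icc_sub_add_le_Icc_neg (v : ℝ≥0) (a r : ℝ) :
    gaussianReal 0 v (Icc (a - r) (a + r)) ≤ gaussianReal 0 v (Icc (-r) r) := by
  rcases eq_or_ne v 0 with rfl | hv
  · rw [gaussianReal_zero_var]
    by_cases h0 : (0 : ℝ) ∈ Icc (a - r) (a + r)
    · have : (0 : ℝ) ∈ Icc (-r) r := ⟨by linarith [h0.1, h0.2], by linarith [h0.1, h0.2]⟩
      rw [Measure.dirac_apply_of_mem this]
      exact prob_le_one
    · rw [Measure.dirac_apply' _ measurableSet_Icc, indicator_of_notMem h0]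
      exact zero_le
  · rw [gaussianReal_of_var_ne_zero 0 hv]
    exact withDensity_Icc_sub_add_le_Icc_neg (fun _ _ => gaussianPDF_le_of_abs_le v) a r

section GramSchmidt

variable {𝕜 E ι : Type*} [RCLike 𝕜] [NormedAddCommGroup E] [InnerProductSpace 𝕜 E]
  [LinearOrder ι] [LocallyFiniteOrderBot ι] [WellFoundedLT ι]

theorem inner_gramSchmidtNormed_of_lt (f : ι → E) {i j : ι} (hij : i < j) :
    inner 𝕜 (gramSchmidtNormed 𝕜 f j) (f i) = 0 := by
  rw [gramSchmidtNormed, inner_smul_left, gramSchmidt_inv_triangular 𝕜 f hij, mul_zero]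

theorem inner_gramSchmidt_self (f : ι → E) (n : ι) :
    inner 𝕜 (gramSchmidt 𝕜 f n) (f n) = (‖gramSchmidt 𝕜 f n‖ : 𝕜) ^ 2 := by
  conv_lhs => rw [gramSchmidt_def'' 𝕜 f n]
  rw [inner_add_right, inner_sum, Finset.sum_eq_zero fun i hi => by
    rw [inner_smul_right, gramSchmidt_orthogonal 𝕜 f (Finset.mem_Iio.1 hi).ne', mul_zero],
    add_zero, inner_self_eq_norm_sq_to_K]

theorem inner_gramSchmidtNormed_self (f : ι → E) (n : ι) :
    inner 𝕜 (gramSchmidtNormed 𝕜 f n) (f n) = ‖gramSchmidt 𝕜 f n‖ := by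
  rcases eq_or_ne (gramSchmidt 𝕜 f n) 0 with h | h
  · simp [gramSchmidtNormed, h]
  rw [gramSchmidtNormed, inner_smul_left, inner_gramSchmidt_self, map_inv₀, RCLike.conj_ofReal]
  field_simp

end GramSchmidt

theorem Orthonormal.eq_mulVec_of_sum_smul_eq {ι E : Type*} [Fintype ι] [NormedAddCommGroup E]
    [InnerProductSpace ℝ E] {e g : ι → E} (he : Orthonormal ℝ e) {z t : ι → ℝ}
    (h : ∑ i, z i • e i = ∑ i, t i • g i) :
    z = Matrix.of (fun j i => inner ℝ (e j) (g i)) *ᵥ t := by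
  funext j
  rw [← he.inner_right_fintype z j, h, inner_sum]
  simp only [real_inner_smul_right, mulVec, dotProduct, of_apply, mul_comm]

theorem measurableSet_setOf_exists_abs_le {ι E : Type*} [Fintype ι] [TopologicalSpace E]
    [T2Space E] [MeasurableSpace E] [OpensMeasurableSpace E] {f : (ι → ℝ) → E}
    (hf : Continuous f) (b : ι → ℝ) :
    MeasurableSet {x | ∃ t : ι → ℝ, (∀ i, |t i| ≤ b i) ∧ x = f t} := by
  have : {x | ∃ t : ι → ℝ, (∀ i, |t i| ≤ b i) ∧ x = f t} = f '' Icc (-b) b := by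
    ext x
    simp only [mem_ofPred_eq, mem_image, mem_Icc, Pi.le_def, Pi.neg_apply, abs_le, forall_and,
      eq_comm]
  rw [this]
  exact (isCompact_Icc.image hf).isClosed.measurableSet

def affineCubeImage {n : ℕ} (c : Matrix (Fin n) (Fin n) ℝ) (v : Fin n → ℝ) :
    Set (Fin n → ℝ) :=
  {z | ∃ t : Fin n → ℝ, (∀ i, |t i| ≤ 1) ∧ z = v + c *ᵥ t}

theorem measurableSet_affineCubeImage {n : ℕ} (c : Matrix (Fin n) (Fin n) ℝ) (v : Fin n → ℝ) :
    MeasurableSet (affineCubeImage c v) :=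
  measurableSet_setOf_exists_abs_le (f := fun t => v + c *ᵥ t) (by fun_prop) _

theorem snoc_mem_affineCubeImage {n : ℕ} {c : Matrix (Fin (n + 1)) (Fin (n + 1)) ℝ}
    (hc : c.IsUpperTriangular) (hlast : 0 < c (Fin.last n) (Fin.last n)) {v : Fin (n + 1) → ℝ}
    {w : Fin n → ℝ} {x : ℝ} (h : Fin.snoc w x ∈ affineCubeImage c v) :
    x ∈ Icc (v (Fin.last n) - c (Fin.last n) (Fin.last n))
        (v (Fin.last n) + c (Fin.last n) (Fin.last n)) ∧
      w ∈ affineCubeImage (c.submatrix Fin.castSucc Fin.castSucc) fun j => v j.castSucc +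
        (x - v (Fin.last n)) / c (Fin.last n) (Fin.last n) * c j.castSucc (Fin.last n) := by
  obtain ⟨t, ht, hz⟩ := h
  have hrow (j : Fin (n + 1)) : (Fin.snoc w x : Fin (n + 1) → ℝ) j = v j + ∑ i, c j i * t i := by
    rw [hz]; rfl
  have hx : x = v (Fin.last n) + c (Fin.last n) (Fin.last n) * t (Fin.last n) := by
    have hbelow (i : Fin n) : c (Fin.last n) i.castSucc = 0 := hc (Fin.castSucc_lt_last i)
    simpa [Fin.sum_univ_castSucc, hbelow] using hrow (Fin.last n)
  have htL : t (Fin.last n) = (x - v (Fin.last n)) / c (Fin.last n) (Fin.last n) := by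
    rw [eq_div_iff hlast.ne', hx]; ring
  refine ⟨?_, fun i => t i.castSucc, fun i => ht _, funext fun j => ?_⟩
  · rw [← mem_Icc_iff_abs_le, hx, sub_add_cancel_left, abs_neg, abs_mul, abs_of_pos hlast]
    exact mul_le_of_le_one_right hlast.le (ht _)
  have hj := hrow j.castSucc
  rw [Fin.snoc_castSucc, Fin.sum_univ_castSucc, htL] at hj
  simp only [hj, Pi.add_apply, mulVec, dotProduct, submatrix_apply]
  ring

theorem MeasureTheory.Measure.pi_apply_eq_lintegral_snoc {α : Type*} [MeasurableSpace α] {n : ℕ}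
    (μ : Measure α) [SigmaFinite μ] {s : Set (Fin (n + 1) → α)} (hs : MeasurableSet s) :
    Measure.pi (fun _ => μ) s = ∫⁻ x, Measure.pi (fun _ => μ) {w | Fin.snoc w x ∈ s} ∂μ := by
  have hsplit := measurePreserving_piFinSuccAbove (fun _ : Fin (n + 1) => μ) (Fin.last n)
  rw [← hsplit.symm.measure_preimage_equiv, Measure.prod_apply (MeasurableEquiv.measurable _ hs)]
  congr! with x
  simp only [MeasurableEquiv.piFinSuccAbove, Fin.insertNthEquiv_last]
  rfl

theorem measure_pi_affineCubeImage_le_prod {ν : Measure ℝ} [SigmaFinite ν]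
    (hν : ∀ a r, ν (Icc (a - r) (a + r)) ≤ ν (Icc (-r) r)) {n : ℕ}
    (c : Matrix (Fin n) (Fin n) ℝ) (hc : c.IsUpperTriangular) (hdiag : ∀ i, 0 < c i i)
    (v : Fin n → ℝ) :
    Measure.pi (fun _ => ν) (affineCubeImage c v) ≤ ∏ i, ν (Icc (-c i i) (c i i)) := by
  induction n with
  | zero =>
    rw [Measure.pi_of_empty]
    exact prob_le_one
  | succ n ih =>
    set B := ∏ i : Fin n, ν (Icc (-c i.castSucc i.castSucc) (c i.castSucc i.castSucc))
    set a := v (Fin.last n)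
    set r := c (Fin.last n) (Fin.last n)
    have hslice (x : ℝ) : Measure.pi (fun _ => ν) {w | Fin.snoc w x ∈ affineCubeImage c v} ≤
        (Icc (a - r) (a + r)).indicator (fun _ => B) x := by
      by_cases hx : x ∈ Icc (a - r) (a + r)
      · rw [indicator_of_mem hx]
        exact (measure_mono fun w hw => (snoc_mem_affineCubeImage hc (hdiag _) hw).2).trans
          (ih _ (fun i j hij => hc (Fin.castSucc_lt_castSucc_iff.2 hij)) (fun i => hdiag _) _)
      · rw [indicator_of_notMem hx, nonpos_iff_eq_zero]
        exact measure_mono_null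
          (fun w hw => absurd (snoc_mem_affineCubeImage hc (hdiag _) hw).1 hx) measure_empty
    calc Measure.pi (fun _ => ν) (affineCubeImage c v)
        = ∫⁻ x, Measure.pi (fun _ => ν) {w | Fin.snoc w x ∈ affineCubeImage c v} ∂ν :=
          Measure.pi_apply_eq_lintegral_snoc ν (measurableSet_affineCubeImage c v)
      _ ≤ ∫⁻ x, (Icc (a - r) (a + r)).indicator (fun _ => B) x ∂ν := lintegral_mono hslice
      _ = B * ν (Icc (a - r) (a + r)) := lintegral_indicator_const measurableSet_Icc _
      _ ≤ B * ν (Icc (-r) r) := mul_le_mul_right (hν _ _) B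
      _ = ∏ i, ν (Icc (-c i i) (c i i)) :=
          (Fin.prod_univ_castSucc fun i => ν (Icc (-c i i) (c i i))).symm

theorem zonotope_prob_le_rectangle_prob_general (m k : ℕ)
    (g : Fin k → EuclideanSpace ℝ (Fin m)) (hg : LinearIndependent ℝ g)
    (σ : NNReal) :
    ((Measure.pi fun _ : Fin k => gaussianReal 0 (σ ^ 2)).map
        (fun z : Fin k → ℝ => ∑ i, z i • gramSchmidtONB g i))
        {x | ∃ t : Fin k → ℝ, (∀ i, |t i| ≤ 1) ∧ x = ∑ i, t i • g i} ≤
      ((Measure.pi fun _ : Fin k => gaussianReal 0 (σ ^ 2)).map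
        (fun z : Fin k → ℝ => ∑ i, z i • gramSchmidtONB g i))
        {x | ∃ t : Fin k → ℝ,
          (∀ i, |t i| ≤ (inner ℝ (gramSchmidtONB g i) (g i) : ℝ)) ∧
          x = ∑ i, t i • gramSchmidtONB g i} := by
  set e := gramSchmidtONB g
  have he : Orthonormal ℝ e := gramSchmidtNormed_orthonormal hg
  set C : Matrix (Fin k) (Fin k) ℝ := Matrix.of fun j i => inner ℝ (e j) (g i)
  have hC : C.IsUpperTriangular := fun j i hij => inner_gramSchmidtNormed_of_lt g hij
  have hCdiag : ∀ i, 0 < C i i := fun i => by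
    simpa [C, e, gramSchmidtONB, inner_gramSchmidtNormed_self] using gramSchmidt_ne_zero i hg
  have hT : Continuous fun z : Fin k → ℝ => ∑ i, z i • e i := by fun_prop
  rw [Measure.map_apply hT.measurable (measurableSet_setOf_exists_abs_le (by fun_prop) _),
    Measure.map_apply hT.measurable (measurableSet_setOf_exists_abs_le (by fun_prop) _)]
  calc _ ≤ Measure.pi (fun _ => gaussianReal 0 (σ ^ 2)) (affineCubeImage C 0) :=
        measure_mono <| by
          rintro z ⟨t, ht, hz⟩
          exact ⟨t, ht, (he.eq_mulVec_of_sum_smul_eq hz).trans (zero_add _).symm⟩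
    _ ≤ ∏ i, gaussianReal 0 (σ ^ 2) (Icc (-C i i) (C i i)) :=
        measure_pi_affineCubeImage_le_prod (gaussianReal_Icc_sub_add_le_Icc_neg _) C hC hCdiag 0
    _ = Measure.pi (fun _ => gaussianReal 0 (σ ^ 2)) (univ.pi fun i => Icc (-C i i) (C i i)) :=
        (Measure.pi_pi _ _).symm
    _ ≤ _ := measure_mono fun z hz => by exact ⟨z, fun i => abs_le.2 (hz i (mem_univ i)), rfl⟩

/-- Comparison between the zonotope `Zo = Σ [−gⁱ, gⁱ]` and the hyper-rectangle
`R = Σ [−⟨eⁱ,gⁱ⟩eⁱ, ⟨eⁱ,gⁱ⟩eⁱ]` built on the Gram–Schmidt orthonormalization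
`e` of `g`: an isotropic centered Gaussian vector on the span of the `gⁱ`
(realized as the image of a standard product Gaussian through
`z ↦ ∑ zᵢ • eᵢ`, each coordinate being `N(0,σ²)`) lies in `Zo` with
probability at most that of `R`. -/
theorem zonotope_prob_le_rectangle_prob (m k : ℕ) (hk : k ≤ m)
    (g : Fin k → EuclideanSpace ℝ (Fin m)) (hg : LinearIndependent ℝ g)
    (σ : NNReal) (hσ : σ ≠ 0) :
    ((Measure.pi fun _ : Fin k => gaussianReal 0 (σ ^ 2)).map
        (fun z : Fin k → ℝ => ∑ i, z i • gramSchmidtONB g i))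
        {x | ∃ t : Fin k → ℝ, (∀ i, |t i| ≤ 1) ∧ x = ∑ i, t i • g i} ≤
      ((Measure.pi fun _ : Fin k => gaussianReal 0 (σ ^ 2)).map
        (fun z : Fin k → ℝ => ∑ i, z i • gramSchmidtONB g i))
        {x | ∃ t : Fin k → ℝ,
          (∀ i, |t i| ≤ (inner ℝ (gramSchmidtONB g i) (g i) : ℝ)) ∧
          x = ∑ i, t i • gramSchmidtONB g i} :=
  zonotope_prob_le_rectangle_prob_general m k g hg σ
end

section
/- With Q(k, p̃, m) := Π_{ℓ=m−k+1}^{m} P(|T(ℓ)| ≤ √(ℓ/p̃)), where T(ℓ) has Student distribution with ℓ degrees of freedom, and assuming π p̃ ≥ 2m, one has Q(k, p̃, m)² ≤ (2/(π p̃))^k · m!/(m−k)!. -/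
/-- Density of the Student t-distribution with `d` degrees of freedom. -/
noncomputable def studentPDF (d : ℝ) (x : ℝ) : ℝ :=
  Real.Gamma ((d + 1) / 2) / (Real.sqrt (d * Real.pi) * Real.Gamma (d / 2)) *
    (1 + x ^ 2 / d) ^ (-((d + 1) / 2))

/-!
The Student density with `d > 0` degrees of freedom is bounded by its value at the origin, and
log-convexity of `Γ` gives `Γ((d + 1) / 2) ≤ √(d / 2) Γ(d / 2)`, so it is at most `1 / √(2π)`,
the peak of the standard normal density. Hence the factor with `ℓ` degrees of freedom is at most
`2 √(ℓ / p̃) / √(2π)`, its square at most `2 ℓ / (π p̃)`, and the product of these bounds over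
`ℓ = m - k + 1, …, m` is `(2 / (π p̃))^k m! / (m - k)!`.
-/

open Finset Real MeasureTheory
open scoped Nat

theorem Real.Gamma_add_half_le_sqrt_mul_Gamma {s : ℝ} (hs : 0 < s) :
    Gamma (s + 1 / 2) ≤ √s * Gamma s := by
  have hΓ : 0 ≤ Gamma s := (Gamma_pos_of_pos hs).le
  calc Gamma (s + 1 / 2) = Gamma (1 / 2 * s + 1 / 2 * (s + 1)) := by ring_nf
    _ ≤ Gamma s ^ (1 / 2 : ℝ) * Gamma (s + 1) ^ (1 / 2 : ℝ) :=
        Gamma_mul_add_mul_le_rpow_Gamma_mul_rpow_Gamma hs (by linarith) one_half_pos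
          one_half_pos (by norm_num)
    _ = √s * Gamma s := by
        rw [Gamma_add_one hs.ne', ← sqrt_eq_rpow, ← sqrt_eq_rpow, sqrt_mul hs.le,
          mul_left_comm, mul_self_sqrt hΓ]

lemma studentPDF_nonneg {d : ℝ} (hd : 0 < d) (x : ℝ) : 0 ≤ studentPDF d x := by
  have := Gamma_pos_of_pos (half_pos hd)
  have := Gamma_pos_of_pos (by linarith : 0 < (d + 1) / 2)
  unfold studentPDF
  positivity

lemma studentPDF_le_inv_sqrt_two_pi {d : ℝ} (hd : 0 < d) (x : ℝ) :
    studentPDF d x ≤ (√(2 * π))⁻¹ := by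
  have hΓ := Gamma_pos_of_pos (half_pos hd)
  have hconst : Gamma ((d + 1) / 2) / (√(d * π) * Gamma (d / 2)) ≤ (√(2 * π))⁻¹ := by
    have hsplit : √(d * π) = √(d / 2) * √(2 * π) := by
      rw [← sqrt_mul (by positivity)]; ring_nf
    have hgamma : Gamma ((d + 1) / 2) ≤ √(d / 2) * Gamma (d / 2) := by
      simpa [add_div] using Gamma_add_half_le_sqrt_mul_Gamma (half_pos hd)
    rw [div_le_iff₀ (by positivity), hsplit]
    exact hgamma.trans_eq (by field_simp)
  have htail : (1 + x ^ 2 / d) ^ (-((d + 1) / 2)) ≤ 1 :=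
    rpow_le_one_of_one_le_of_nonpos (le_add_of_nonneg_right (by positivity)) (by linarith)
  calc studentPDF d x ≤ Gamma ((d + 1) / 2) / (√(d * π) * Gamma (d / 2)) * 1 :=
        mul_le_mul_of_nonneg_left htail (div_nonneg (Gamma_pos_of_pos (by linarith)).le
          (by positivity))
    _ ≤ (√(2 * π))⁻¹ := by rwa [mul_one]

lemma norm_setIntegral_Icc_le_of_norm_le_const {f : ℝ → ℝ} {a b C : ℝ} (hab : a ≤ b)
    (hf : ∀ x, ‖f x‖ ≤ C) : ‖∫ x in Set.Icc a b, f x‖ ≤ C * (b - a) := by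
  rw [integral_Icc_eq_integral_Ioc, ← intervalIntegral.integral_of_le hab, ← abs_of_nonneg
    (sub_nonneg.2 hab)]
  exact intervalIntegral.norm_integral_le_of_norm_le_const fun x _ => hf x

lemma sq_integral_studentPDF_le {d p : ℝ} (hd : 0 < d) (hp : 0 < p) :
    (∫ x in Set.Icc (-√(d / p)) (√(d / p)), studentPDF d x) ^ 2 ≤ 2 / (π * p) * d := by
  have hbound := norm_setIntegral_Icc_le_of_norm_le_const (f := studentPDF d)
    (neg_le_self (sqrt_nonneg (d / p))) fun x => by
      rw [norm_of_nonneg (studentPDF_nonneg hd x)]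
      exact studentPDF_le_inv_sqrt_two_pi hd x
  obtain ⟨hlower, hupper⟩ := abs_le.1 hbound
  calc (∫ x in Set.Icc (-√(d / p)) (√(d / p)), studentPDF d x) ^ 2
      ≤ ((√(2 * π))⁻¹ * (√(d / p) - -√(d / p))) ^ 2 := sq_le_sq' hlower hupper
    _ = 2 / (π * p) * d := by
      rw [sub_neg_eq_add, ← two_mul, mul_pow, mul_pow, inv_pow, sq_sqrt (by positivity),
        sq_sqrt (by positivity)]
      field_simp

theorem Nat.prod_Ioc_id_eq_factorial (n : ℕ) : ∏ l ∈ Ioc 0 n, l = n ! := by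
  rw [← Icc_add_one_left_eq_Ioc, ← Ico_add_one_right_eq_Icc]
  exact prod_Ico_id_eq_factorial n

theorem Nat.factorial_mul_prod_Ioc_id {a b : ℕ} (hab : a ≤ b) : a ! * ∏ l ∈ Ioc a b, l = b ! := by
  rw [← prod_Ioc_id_eq_factorial, ← prod_Ioc_id_eq_factorial,
    prod_Ioc_consecutive _ (Nat.zero_le a) hab]

theorem prod_Icc_natCast_eq_factorial_div_factorial (m k : ℕ) :
    ∏ l ∈ Icc (m - k + 1) m, (l : ℝ) = m ! / (m - k) ! := by
  rw [Icc_add_one_left_eq_Ioc, eq_div_iff (by positivity), mul_comm, ← Nat.cast_prod,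
    ← Nat.cast_mul, Nat.factorial_mul_prod_Ioc_id (Nat.sub_le m k)]

theorem studentT_product_bound_general (m k : ℕ) (hkm : k ≤ m)
    (ptilde : ℝ) (hp : 0 < ptilde) :
    (∏ l ∈ Finset.Icc (m - k + 1) m,
        ∫ x in Set.Icc (-Real.sqrt (l / ptilde)) (Real.sqrt (l / ptilde)),
          studentPDF l x) ^ 2 ≤
      (2 / (Real.pi * ptilde)) ^ k *
        (m.factorial / (m - k).factorial : ℝ) := by
  calc (∏ l ∈ Icc (m - k + 1) m,
        ∫ x in Set.Icc (-√(l / ptilde)) (√(l / ptilde)), studentPDF l x) ^ 2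
      = ∏ l ∈ Icc (m - k + 1) m,
          (∫ x in Set.Icc (-√(l / ptilde)) (√(l / ptilde)), studentPDF l x) ^ 2 :=
        (prod_pow _ _ _).symm
    _ ≤ ∏ l ∈ Icc (m - k + 1) m, 2 / (π * ptilde) * l :=
        prod_le_prod (fun _ _ => sq_nonneg _) fun l hl =>
          sq_integral_studentPDF_le (Nat.cast_pos.2 (by grind)) hp
    _ = (2 / (π * ptilde)) ^ k * (m ! / (m - k) ! : ℝ) := by
        rw [prod_mul_distrib, prod_const, Nat.card_Icc,
          prod_Icc_natCast_eq_factorial_div_factorial m k, show m + 1 - (m - k + 1) = k by omega]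

/-- With `Q(k, p̃, m) = Π_{ℓ=m−k+1}^{m} P(|T(ℓ)| ≤ √(ℓ/p̃))`, where `T(ℓ)` is
Student with `ℓ` degrees of freedom, and assuming `π p̃ ≥ 2m`, one has
`Q(k, p̃, m)² ≤ (2/(π p̃))^k · m!/(m−k)!`. -/
theorem studentT_product_bound (m k : ℕ) (hk1 : 1 ≤ k) (hkm : k ≤ m)
    (ptilde : ℝ) (hp : 0 < ptilde) (hπ : 2 * m ≤ Real.pi * ptilde) :
    (∏ l ∈ Finset.Icc (m - k + 1) m,
        ∫ x in Set.Icc (-Real.sqrt (l / ptilde)) (Real.sqrt (l / ptilde)),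
          studentPDF l x) ^ 2 ≤
      (2 / (Real.pi * ptilde)) ^ k *
        (m.factorial / (m - k).factorial : ℝ) :=
  studentT_product_bound_general m k hkm ptilde hp
end

section
/- Let g^1, …, g^k ∈ ℝ^m be pairwise distinct vectors whose inner products with a fixed unit vector t all coincide, and consider the function F(w) = Max_h(⟨g^1,w⟩, …, ⟨g^k,w⟩), where Max_h is the sum of the h largest among its k arguments (1 ≤ h < k). Then F is convex on ℝ^m, and it is not affine in any neighborhood of t restricted to the affine tangent space t + t^⊥; in particular t cannot be a local maximum of F − c·⟨v, w⟩ on the sphere for generic linear corrections when the g^i have pairwise distinct projections onto t^⊥. -/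
/-!
At `t` every `h`-subset `I` gives the same value `⟨∑_{i ∈ I} gⁱ, t⟩ = h ⟨g¹, t⟩`, so `F` is a
maximum of linear forms that all agree at `t`. For distinct `gⁱ ≠ gʲ` and `I = S ∪ {i}`,
`J = S ∪ {j}`, the direction `d = gⁱ - gʲ` lies in `t^⊥`, and
`F (t + r d) + F (t - r d) ≥ ⟨∑_I g, t + r d⟩ + ⟨∑_J g, t - r d⟩ = 2 F t + r ‖d‖²`,
whereas an affine function has second difference `0`.
-/

open Finset
open scoped RealInnerProductSpace

theorem ConvexOn.finset_sup' {𝕜 E β ι : Type*} [Semiring 𝕜] [PartialOrder 𝕜] [AddCommMonoid E]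
    [SMul 𝕜 E] [AddCommMonoid β] [LinearOrder β] [IsOrderedAddMonoid β] [Module 𝕜 β]
    [PosSMulStrictMono 𝕜 β] {s : Set E} {u : Finset ι} (hu : u.Nonempty) {f : ι → E → β}
    (hf : ∀ i ∈ u, ConvexOn 𝕜 s (f i)) : ConvexOn 𝕜 s (u.sup' hu f) :=
  sup'_induction hu f (fun _ h₁ _ h₂ => h₁.sup h₂) hf

section InnerProductSpace

variable {E ι : Type*} [NormedAddCommGroup E] [InnerProductSpace ℝ E] {u : Finset ι}

theorem convexOn_finset_sup'_inner (hu : u.Nonempty) (a : ι → E) :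
    ConvexOn ℝ Set.univ (fun w => u.sup' hu fun I => ⟪a I, w⟫) := by
  have h_eq : (fun w => u.sup' hu fun I => ⟪a I, w⟫) =
      u.sup' hu fun I => ⇑(innerₛₗ ℝ (a I)) := by
    ext w
    simp only [Finset.sup'_apply, innerₛₗ_apply_apply]
  rw [h_eq]
  exact ConvexOn.finset_sup' hu fun I _ => (innerₛₗ ℝ (a I)).convexOn convex_univ

theorem exists_pos_norm_smul_lt (x : E) {ε : ℝ} (hε : 0 < ε) :
    ∃ r : ℝ, 0 < r ∧ ‖r • x‖ < ε := by
  refine ⟨ε / (‖x‖ + 1), by positivity, ?_⟩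
  rw [norm_smul, Real.norm_of_nonneg (by positivity), div_mul_eq_mul_div,
    div_lt_iff₀ (by positivity)]
  nlinarith

theorem not_affine_finset_sup'_inner (hu : u.Nonempty) (a : ι → E) {t : E} {β : ℝ}
    (hβ : ∀ I ∈ u, ⟪a I, t⟫ = β) {I J : ι} (hI : I ∈ u) (hJ : J ∈ u) (hIJ : a I ≠ a J)
    {K : Submodule ℝ E} (hK : a I - a J ∈ K) {ε : ℝ} (hε : 0 < ε) :
    ¬∃ (φ : K →ₗ[ℝ] ℝ) (c : ℝ), ∀ v : K, ‖v‖ < ε →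
      u.sup' hu (fun I => ⟪a I, t + (v : E)⟫) = φ v + c := by
  rintro ⟨φ, c, hφ⟩
  set f : E → ℝ := fun w => u.sup' hu fun I => ⟪a I, w⟫
  replace hφ : ∀ v : K, ‖v‖ < ε → f (t + v) = φ v + c := hφ
  have hft : f t ≤ β := sup'_le hu _ fun I hI => (hβ I hI).le
  obtain ⟨r, hr, hrε⟩ := exists_pos_norm_smul_lt (a I - a J) hε
  set v : K := ⟨r • (a I - a J), K.smul_mem r hK⟩
  have hv : ‖v‖ < ε := hrε
  have h_second_difference : f (t + v) + f (t + ↑(-v)) = 2 * f t := by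
    have h0 := hφ 0 (by simpa using hε)
    simp only [ZeroMemClass.coe_zero, add_zero, map_zero, zero_add] at h0
    rw [show f t = c from h0, hφ v hv, hφ (-v) (by rwa [norm_neg]), map_neg]
    ring
  have h_plus : β + ⟪a I, (v : E)⟫ ≤ f (t + v) := by
    rw [← hβ I hI, ← inner_add_right]
    exact le_sup' (fun I => ⟪a I, t + (v : E)⟫) hI
  have h_minus : β - ⟪a J, (v : E)⟫ ≤ f (t + ↑(-v)) := by
    rw [← hβ J hJ, Submodule.coe_neg, ← sub_eq_add_neg, ← inner_sub_right]
    exact le_sup' (fun I => ⟪a I, t - (v : E)⟫) hJ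
  have h_gap : ⟪a I, (v : E)⟫ - ⟪a J, (v : E)⟫ = r * ‖a I - a J‖ ^ 2 := by
    rw [← inner_sub_left, real_inner_smul_right, real_inner_self_eq_norm_sq]
  have h_pos : 0 < r * ‖a I - a J‖ ^ 2 := by
    have hd := norm_pos_iff.mpr (sub_ne_zero.mpr hIJ)
    positivity
  linarith

end InnerProductSpace

theorem Finset.exists_insert_mem_powersetCard_of_ne {ι : Type*} [Fintype ι] [DecidableEq ι]
    {h : ℕ} (hh : 1 ≤ h) (hhk : h < Fintype.card ι) {i j : ι} (hij : i ≠ j) :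
    ∃ S : Finset ι, i ∉ S ∧ j ∉ S ∧
      insert i S ∈ univ.powersetCard h ∧ insert j S ∈ univ.powersetCard h := by
  obtain ⟨S, hS, hcard⟩ := exists_subset_card_eq (s := univ \ {i, j}) (n := h - 1) (by
    rw [card_sdiff_of_subset (subset_univ _), card_univ, card_pair hij]
    omega)
  have hiS : i ∉ S := fun hi => (mem_sdiff.mp (hS hi)).2 (by simp)
  have hjS : j ∉ S := fun hj => (mem_sdiff.mp (hS hj)).2 (by simp)
  refine ⟨S, hiS, hjS, ?_, ?_⟩ <;>
    simp only [mem_powersetCard, subset_univ, true_and, card_insert_of_notMem, hiS, hjS,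
      not_false_eq_true, hcard] <;> omega

theorem maxh_convex_not_affine_general (m k h : ℕ) (hh : 1 ≤ h) (hhk : h < k)
    (g : Fin k → EuclideanSpace ℝ (Fin m)) (hg : Function.Injective g)
    (t : EuclideanSpace ℝ (Fin m))
    (heq : ∀ i j : Fin k, (inner ℝ (g i) t : ℝ) = inner ℝ (g j) t)
    (hne : ((Finset.univ : Finset (Fin k)).powersetCard h).Nonempty)
    (F : EuclideanSpace ℝ (Fin m) → ℝ)
    (hF : ∀ w, F w = ((Finset.univ : Finset (Fin k)).powersetCard h).sup' hne
      (fun I => ∑ i ∈ I, (inner ℝ (g i) w : ℝ))) :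
    ConvexOn ℝ Set.univ F ∧
      ∀ ε : ℝ, 0 < ε →
        ¬∃ (φ : (ℝ ∙ t)ᗮ →ₗ[ℝ] ℝ) (c : ℝ),
          ∀ v : (ℝ ∙ t)ᗮ, ‖v‖ < ε →
            F (t + (v : EuclideanSpace ℝ (Fin m))) = φ v + c := by
  have hF' : F = fun w => (univ.powersetCard h).sup' hne fun I => ⟪∑ i ∈ I, g i, w⟫ :=
    funext fun w => by simp only [hF, sum_inner]
  subst hF'
  refine ⟨convexOn_finset_sup'_inner hne _, fun ε hε => ?_⟩
  let i : Fin k := ⟨0, by omega⟩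
  let j : Fin k := ⟨1, by omega⟩
  have hij : i ≠ j := by simp [i, j, Fin.ext_iff]
  obtain ⟨S, hiS, hjS, hI, hJ⟩ := exists_insert_mem_powersetCard_of_ne hh (by simpa) hij
  have h_sum_sub : ∑ l ∈ insert i S, g l - ∑ l ∈ insert j S, g l = g i - g j := by
    rw [sum_insert hiS, sum_insert hjS, add_sub_add_right_eq_sub]
  have h_const : ∀ I ∈ univ.powersetCard h, ⟪∑ l ∈ I, g l, t⟫ = h * ⟪g i, t⟫ := by
    intro I hI
    rw [sum_inner, sum_congr rfl fun l _ => heq l i, sum_const, (mem_powersetCard.mp hI).2,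
      nsmul_eq_mul]
  refine not_affine_finset_sup'_inner hne _ h_const hI hJ ?_ ?_ hε
  · rw [← sub_ne_zero, h_sum_sub, sub_ne_zero]
    exact hg.ne hij
  · rw [h_sum_sub, Submodule.mem_orthogonal_singleton_iff_inner_right, inner_sub_right,
      real_inner_comm, heq i j, real_inner_comm, sub_self]

/-- Let `F(w) = Max_h(⟨g¹,w⟩, …, ⟨gᵏ,w⟩)` be the sum of the `h` largest of the
`k` linear forms `⟨gⁱ,·⟩` (`1 ≤ h < k`), where the `gⁱ` are pairwise distinct
and have equal inner products with a unit vector `t`. Then `F` is convex and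
it is not affine in any neighborhood of `t` within the affine tangent space
`t + t^⊥`. -/
theorem maxh_convex_not_affine (m k h : ℕ) (hh : 1 ≤ h) (hhk : h < k)
    (g : Fin k → EuclideanSpace ℝ (Fin m)) (hg : Function.Injective g)
    (t : EuclideanSpace ℝ (Fin m)) (ht : ‖t‖ = 1)
    (heq : ∀ i j : Fin k, (inner ℝ (g i) t : ℝ) = inner ℝ (g j) t)
    (hne : ((Finset.univ : Finset (Fin k)).powersetCard h).Nonempty)
    (F : EuclideanSpace ℝ (Fin m) → ℝ)
    (hF : ∀ w, F w = ((Finset.univ : Finset (Fin k)).powersetCard h).sup' hne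
      (fun I => ∑ i ∈ I, (inner ℝ (g i) w : ℝ))) :
    ConvexOn ℝ Set.univ F ∧
      ∀ ε : ℝ, 0 < ε →
        ¬∃ (φ : (ℝ ∙ t)ᗮ →ₗ[ℝ] ℝ) (c : ℝ),
          ∀ v : (ℝ ∙ t)ᗮ, ‖v‖ < ε →
            F (t + (v : EuclideanSpace ℝ (Fin m))) = φ v + c :=
  maxh_convex_not_affine_general m k h hh hhk g hg t heq hne F hF
end
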